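/- Let (Ω, F, μ) be a probability space with a filtration (𝓕_t) indexed by a linearly ordered set, and let r ∈ (0,1). Let Y¹ and Y² be adapted processes with Y¹_t ≥ 0 and Y²_t ≥ 0 a.e. for every t, such that the processes ((Y¹_t)^r)_t and ((Y²_t)^r)_t are submartingales with respect to (𝓕_t) and μ. Then for every λ ∈ [0,1], the process ((λ·Y¹_t + (1−λ)·Y²_t)^r)_t is a submartingale with respect to (𝓕_t) and μ. -/

import Mathlib

/-!
The map `Φ(z₁, z₂) = (λ z₁ ^ (1/r) + (1 - λ) z₂ ^ (1/r)) ^ r` is nondecreasing, convex and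
positively homogeneous of degree one on the nonnegative quadrant, and
`(λ Y¹_t + (1 - λ) Y²_t) ^ r = Φ((Y¹_t) ^ r, (Y²_t) ^ r)`. At each time `s`, the tangent plane
of `Φ` at the time-`s` value is a linear form with nonnegative `ℱ_s`-measurable coefficients
which agrees with `Φ` there (Euler's identity) and lies below `Φ` everywhere (Hölder's inequality
with exponents `1/(1-r)` and `1/r`). Pulling these coefficients out of the conditional
expectation transfers the submartingale property from `(Y¹) ^ r` and `(Y²) ^ r` to
`Φ((Y¹) ^ r, (Y²) ^ r)`.
-/

open MeasureTheory

namespace Real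

lemma rpow_one_sub_mul_rpow_self {x : ℝ} (hx : 0 ≤ x) (r : ℝ) : x ^ (1 - r) * x ^ r = x := by
  rw [← rpow_add' hx (by simp), sub_add_cancel, rpow_one]

lemma sum_rpow_one_sub_mul_rpow_le {ι : Type*} (s : Finset ι) {x y : ι → ℝ} {r : ℝ}
    (hr0 : 0 < r) (hr1 : r < 1) (hx : ∀ i ∈ s, 0 ≤ x i) (hy : ∀ i ∈ s, 0 ≤ y i) :
    ∑ i ∈ s, x i ^ (1 - r) * y i ^ r ≤ (∑ i ∈ s, x i) ^ (1 - r) * (∑ i ∈ s, y i) ^ r := by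
  have holder := inner_le_Lp_mul_Lq_of_nonneg s (HolderConjugate.one_sub_inv_inv hr0 hr1)
    (fun i hi => rpow_nonneg (hx i hi) (1 - r)) (fun i hi => rpow_nonneg (hy i hi) r)
  rwa [Finset.sum_congr rfl fun i hi => rpow_rpow_inv (hx i hi) (sub_ne_zero.2 hr1.ne'),
    Finset.sum_congr rfl fun i hi => rpow_rpow_inv (hy i hi) hr0.ne', one_div, inv_inv,
    one_div, inv_inv] at holder

lemma rpow_one_sub_mul_rpow_add_le {r : ℝ} (hr0 : 0 < r) (hr1 : r < 1) {x₁ x₂ y₁ y₂ : ℝ}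
    (hx₁ : 0 ≤ x₁) (hx₂ : 0 ≤ x₂) (hy₁ : 0 ≤ y₁) (hy₂ : 0 ≤ y₂) :
    x₁ ^ (1 - r) * y₁ ^ r + x₂ ^ (1 - r) * y₂ ^ r ≤ (x₁ + x₂) ^ (1 - r) * (y₁ + y₂) ^ r := by
  simpa [Fin.sum_univ_two] using sum_rpow_one_sub_mul_rpow_le Finset.univ hr0 hr1
    (x := ![x₁, x₂]) (y := ![y₁, y₂]) (by simp [Fin.forall_fin_two, hx₁, hx₂])
    (by simp [Fin.forall_fin_two, hy₁, hy₂])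

end Real

open Real

-- With `B = w₁ b₁ + w₂ b₂`, the coefficients `wᵢ bᵢ ^ (1 - r) B ^ (r - 1)` are the gradient of
-- `Φ` at `(b₁ ^ r, b₂ ^ r)`; when `B = 0` the junk value `0 ^ (r - 1) = 0` makes both vanish.
lemma tangent_le_rpow_mul_add_mul {r : ℝ} (hr0 : 0 < r) (hr1 : r < 1) {w₁ w₂ a₁ a₂ b₁ b₂ : ℝ}
    (hw₁ : 0 ≤ w₁) (hw₂ : 0 ≤ w₂) (ha₁ : 0 ≤ a₁) (ha₂ : 0 ≤ a₂) (hb₁ : 0 ≤ b₁) (hb₂ : 0 ≤ b₂) :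
    w₁ * b₁ ^ (1 - r) * (w₁ * b₁ + w₂ * b₂) ^ (r - 1) * a₁ ^ r
      + w₂ * b₂ ^ (1 - r) * (w₁ * b₁ + w₂ * b₂) ^ (r - 1) * a₂ ^ r
      ≤ (w₁ * a₁ + w₂ * a₂) ^ r := by
  set B := w₁ * b₁ + w₂ * b₂
  have hB : 0 ≤ B := by positivity
  have weighted (w a b : ℝ) (hw : 0 ≤ w) (ha : 0 ≤ a) (hb : 0 ≤ b) :
      (w * b) ^ (1 - r) * (w * a) ^ r = w * b ^ (1 - r) * a ^ r := by
    rw [mul_rpow hw hb, mul_rpow hw ha]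
    linear_combination b ^ (1 - r) * a ^ r * rpow_one_sub_mul_rpow_self hw r
  have hBB : B ^ (r - 1) * B ^ (1 - r) ≤ 1 := by
    rcases hB.eq_or_lt with hB0 | hBpos
    · simp [← hB0, zero_rpow (sub_ne_zero.2 hr1.ne)]
    · rw [← rpow_add hBpos]; simp
  calc _ = B ^ (r - 1) * ((w₁ * b₁) ^ (1 - r) * (w₁ * a₁) ^ r
          + (w₂ * b₂) ^ (1 - r) * (w₂ * a₂) ^ r) := by
        rw [weighted w₁ a₁ b₁ hw₁ ha₁ hb₁, weighted w₂ a₂ b₂ hw₂ ha₂ hb₂]; ring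
    _ ≤ B ^ (r - 1) * (B ^ (1 - r) * (w₁ * a₁ + w₂ * a₂) ^ r) := by
        gcongr
        exact rpow_one_sub_mul_rpow_add_le hr0 hr1 (by positivity) (by positivity)
          (by positivity) (by positivity)
    _ ≤ (w₁ * a₁ + w₂ * a₂) ^ r := by
        rw [← mul_assoc]
        exact mul_le_of_le_one_left (by positivity) hBB

lemma tangent_eq_rpow_mul_add_mul {r : ℝ} (hr0 : r ≠ 0) {w₁ w₂ b₁ b₂ : ℝ}
    (hw₁ : 0 ≤ w₁) (hw₂ : 0 ≤ w₂) (hb₁ : 0 ≤ b₁) (hb₂ : 0 ≤ b₂) :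
    w₁ * b₁ ^ (1 - r) * (w₁ * b₁ + w₂ * b₂) ^ (r - 1) * b₁ ^ r
      + w₂ * b₂ ^ (1 - r) * (w₁ * b₁ + w₂ * b₂) ^ (r - 1) * b₂ ^ r
      = (w₁ * b₁ + w₂ * b₂) ^ r := by
  have hB : 0 ≤ w₁ * b₁ + w₂ * b₂ := by positivity
  calc _ = (w₁ * b₁ + w₂ * b₂) ^ (r - 1)
          * (w₁ * (b₁ ^ (1 - r) * b₁ ^ r) + w₂ * (b₂ ^ (1 - r) * b₂ ^ r)) := by ring
    _ = (w₁ * b₁ + w₂ * b₂) ^ r := by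
        rw [rpow_one_sub_mul_rpow_self hb₁, rpow_one_sub_mul_rpow_self hb₂,
          ← rpow_add_one' hB (by simpa using hr0), sub_add_cancel]

lemma rpow_mul_add_one_sub_mul_le {r l a₁ a₂ : ℝ} (hr0 : 0 ≤ r) (hr1 : r ≤ 1) (hl0 : 0 ≤ l)
    (hl1 : l ≤ 1) (ha₁ : 0 ≤ a₁) (ha₂ : 0 ≤ a₂) :
    (l * a₁ + (1 - l) * a₂) ^ r ≤ a₁ ^ r + a₂ ^ r :=
  have hl2 : 0 ≤ 1 - l := by linarith
  calc _ ≤ (a₁ + a₂) ^ r := rpow_le_rpow (by positivity) (by nlinarith) hr0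
    _ ≤ a₁ ^ r + a₂ ^ r := rpow_add_le_add_rpow ha₁ ha₂ hr0 hr1

namespace MeasureTheory

variable {Ω ι : Type*} [Preorder ι] {m0 : MeasurableSpace Ω} {μ : Measure Ω}
  {ℱ : Filtration ι m0}

lemma Integrable.of_nonneg_of_add_le {u v X : Ω → ℝ} (hX : Integrable X μ)
    (hu : AEStronglyMeasurable u μ) (hu0 : 0 ≤ᵐ[μ] u) (hv0 : 0 ≤ᵐ[μ] v) (h : u + v ≤ᵐ[μ] X) :
    Integrable u μ :=
  hX.mono' hu <| by
    filter_upwards [hu0, hv0, h] with ω hu0 hv0 h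
    simp only [Pi.add_apply, Pi.zero_apply] at *
    rw [Real.norm_of_nonneg hu0]
    linarith

lemma Submartingale.mul_le_condExp_mul {f : ι → Ω → ℝ} (hf : Submartingale f ℱ μ) {s t : ι}
    (hst : s ≤ t) {a : Ω → ℝ} (ha : StronglyMeasurable[ℱ s] a) (ha0 : 0 ≤ᵐ[μ] a)
    (haf : Integrable (a * f t) μ) : a * f s ≤ᵐ[μ] μ[a * f t|ℱ s] := by
  filter_upwards [ha0, hf.ae_le_condExp hst,
    condExp_mul_of_stronglyMeasurable_left ha haf (hf.integrable t)] with ω ha0 hle heq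
  rw [heq]
  exact mul_le_mul_of_nonneg_left hle ha0

theorem submartingale_of_linear_minorant {f g X : ι → Ω → ℝ} (hf : Submartingale f ℱ μ)
    (hg : Submartingale g ℱ μ) (hf0 : ∀ t, 0 ≤ᵐ[μ] f t) (hg0 : ∀ t, 0 ≤ᵐ[μ] g t)
    (hXadp : StronglyAdapted ℱ X) (hXint : ∀ t, Integrable (X t) μ)
    (hminor : ∀ s, ∃ a b : Ω → ℝ, StronglyMeasurable[ℱ s] a ∧ StronglyMeasurable[ℱ s] b ∧
      0 ≤ᵐ[μ] a ∧ 0 ≤ᵐ[μ] b ∧ X s =ᵐ[μ] a * f s + b * g s ∧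
      ∀ t, a * f t + b * g t ≤ᵐ[μ] X t) :
    Submartingale X ℱ μ := by
  refine ⟨hXadp, fun s t hst => ?_, hXint⟩
  obtain ⟨a, b, ha, hb, ha0, hb0, heq, hle⟩ := hminor s
  have haf : Integrable (a * f t) μ :=
    (hXint t).of_nonneg_of_add_le
      (((ha.mono (ℱ.le s)).aestronglyMeasurable).mul (hf.integrable t).aestronglyMeasurable)
      (ha0.mul_nonneg (hf0 t)) (hb0.mul_nonneg (hg0 t)) (hle t)
  have hbg : Integrable (b * g t) μ :=
    (hXint t).of_nonneg_of_add_le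
      (((hb.mono (ℱ.le s)).aestronglyMeasurable).mul (hg.integrable t).aestronglyMeasurable)
      (hb0.mul_nonneg (hg0 t)) (ha0.mul_nonneg (hf0 t)) (by rw [add_comm]; exact hle t)
  calc X s =ᵐ[μ] a * f s + b * g s := heq
    _ ≤ᵐ[μ] μ[a * f t|ℱ s] + μ[b * g t|ℱ s] :=
        (hf.mul_le_condExp_mul hst ha ha0 haf).add_le_add (hg.mul_le_condExp_mul hst hb hb0 hbg)
    _ =ᵐ[μ] μ[a * f t + b * g t|ℱ s] := (condExp_add haf hbg _).symm
    _ ≤ᵐ[μ] μ[X t|ℱ s] := condExp_mono (haf.add hbg) (hXint t) (hle t)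

end MeasureTheory

open Real in
theorem convex_combination_admissible_general
    {Ω ι : Type*} [LinearOrder ι] {m0 : MeasurableSpace Ω}
    (μ : Measure Ω) (ℱ : Filtration ι m0)
    (r : ℝ) (hr0 : 0 < r) (hr1 : r < 1)
    (Y1 Y2 : ι → Ω → ℝ)
    (hY1adp : Adapted ℱ Y1) (hY2adp : Adapted ℱ Y2)
    (hY1pos : ∀ t, ∀ᵐ ω ∂μ, 0 ≤ Y1 t ω) (hY2pos : ∀ t, ∀ᵐ ω ∂μ, 0 ≤ Y2 t ω)
    (h1 : Submartingale (fun t ω => Y1 t ω ^ r) ℱ μ)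
    (h2 : Submartingale (fun t ω => Y2 t ω ^ r) ℱ μ)
    (l : ℝ) (hl0 : 0 ≤ l) (hl1 : l ≤ 1) :
    Submartingale (fun t ω => (l * Y1 t ω + (1 - l) * Y2 t ω) ^ r) ℱ μ := by
  have hl2 : 0 ≤ 1 - l := by linarith
  have hSmeas : ∀ t, Measurable[ℱ t] fun ω => l * Y1 t ω + (1 - l) * Y2 t ω := fun t =>
    ((hY1adp t).const_mul l).add ((hY2adp t).const_mul (1 - l))
  refine submartingale_of_linear_minorant h1 h2
    (fun t => by filter_upwards [hY1pos t] with ω h using rpow_nonneg h r)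
    (fun t => by filter_upwards [hY2pos t] with ω h using rpow_nonneg h r)
    (fun t => ((hSmeas t).pow_const r).stronglyMeasurable) (fun t => ?_) fun s =>
    ⟨fun ω => l * Y1 s ω ^ (1 - r) * (l * Y1 s ω + (1 - l) * Y2 s ω) ^ (r - 1),
      fun ω => (1 - l) * Y2 s ω ^ (1 - r) * (l * Y1 s ω + (1 - l) * Y2 s ω) ^ (r - 1),
      ((((hY1adp s).pow_const _).const_mul l).mul ((hSmeas s).pow_const _)).stronglyMeasurable,
      ((((hY2adp s).pow_const _).const_mul _).mul ((hSmeas s).pow_const _)).stronglyMeasurable,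
      ?_, ?_, ?_, fun t => ?_⟩
  · refine ((h1.integrable t).add (h2.integrable t)).mono'
      (((hSmeas t).pow_const r).mono (ℱ.le t) le_rfl).aestronglyMeasurable ?_
    filter_upwards [hY1pos t, hY2pos t] with ω ha₁ ha₂
    rw [norm_of_nonneg (by positivity)]
    exact rpow_mul_add_one_sub_mul_le hr0.le hr1.le hl0 hl1 ha₁ ha₂
  · filter_upwards [hY1pos s, hY2pos s] with ω hb₁ hb₂
    positivity
  · filter_upwards [hY1pos s, hY2pos s] with ω hb₁ hb₂
    positivity
  · filter_upwards [hY1pos s, hY2pos s] with ω hb₁ hb₂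
    exact (tangent_eq_rpow_mul_add_mul hr0.ne' hl0 hl2 hb₁ hb₂).symm
  · filter_upwards [hY1pos s, hY2pos s, hY1pos t, hY2pos t] with ω hb₁ hb₂ ha₁ ha₂
    exact tangent_le_rpow_mul_add_mul hr0 hr1 hl0 hl2 ha₁ ha₂ hb₁ hb₂

/-- If `Y¹, Y²` are nonnegative adapted processes such that `(Y¹)^r` and `(Y²)^r`
are submartingales (`r ∈ (0,1)`), then `(λ Y¹ + (1-λ) Y²)^r` is a submartingale. -/
theorem convex_combination_admissible
    {Ω ι : Type*} [LinearOrder ι] {m0 : MeasurableSpace Ω}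
    (μ : Measure Ω) [IsProbabilityMeasure μ] (ℱ : Filtration ι m0)
    (r : ℝ) (hr0 : 0 < r) (hr1 : r < 1)
    (Y1 Y2 : ι → Ω → ℝ)
    (hY1adp : Adapted ℱ Y1) (hY2adp : Adapted ℱ Y2)
    (hY1pos : ∀ t, ∀ᵐ ω ∂μ, 0 ≤ Y1 t ω) (hY2pos : ∀ t, ∀ᵐ ω ∂μ, 0 ≤ Y2 t ω)
    (h1 : Submartingale (fun t ω => Y1 t ω ^ r) ℱ μ)
    (h2 : Submartingale (fun t ω => Y2 t ω ^ r) ℱ μ)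
    (l : ℝ) (hl0 : 0 ≤ l) (hl1 : l ≤ 1) :
    Submartingale (fun t ω => (l * Y1 t ω + (1 - l) * Y2 t ω) ^ r) ℱ μ :=
  convex_combination_admissible_general μ ℱ r hr0 hr1 Y1 Y2 hY1adp hY2adp hY1pos hY2pos h1 h2 l hl0
    hl1
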